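/- arXiv:1801.06585 — 4 statements merged into one kernel-verified Lean document; each statement's English description precedes it below -/
import Mathlib

section
/- No zigzag in a triangulation contains a subsequence of the form e, e', ..., e', e (i.e., a zigzag cannot pass a pair of consecutive edges and later pass the same pair in reversed order). Consequently, no zigzag is self-reversed: Z ≠ Z⁻¹ for every zigzag Z. -/
open Finset

/-- A (combinatorial) triangulation of a connected closed surface:
a finite set of triangular faces such that every edge lies in exactly two
faces, two distinct faces meet in at most an edge, and the dual graph is
connected. -/
structure Triangulation (V : Type) [Fintype V] [DecidableEq V] where
  faces : Finset (Finset V)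
  faces_nonempty : faces.Nonempty
  card_eq : ∀ F ∈ faces, F.card = 3
  edge_two_faces : ∀ e : Finset V, e.card = 2 → (∃ F ∈ faces, e ⊆ F) →
      (faces.filter fun F => e ⊆ F).card = 2
  inter_le : ∀ F ∈ faces, ∀ F' ∈ faces, F ≠ F' → (F ∩ F').card ≤ 2
  connected : ∀ F ∈ faces, ∀ F' ∈ faces,
      Relation.ReflTransGen
        (fun A B => A ∈ faces ∧ B ∈ faces ∧ (A ∩ B).card = 2) F F'

namespace Triangulation

variable {V : Type} [Fintype V] [DecidableEq V] (T : Triangulation V)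

/-- `e` is an edge of the triangulation. -/
def IsEdge (e : Finset V) : Prop := e.card = 2 ∧ ∃ F ∈ T.faces, e ⊆ F

/-- A zigzag sequence: consecutive edges are adjacent (distinct, sharing a
vertex and a face), the faces containing consecutive pairs are distinct, and
edges two apart are disjoint. -/
def IsZigzagSeq (f : ℕ → Finset V) : Prop :=
  (∀ i, T.IsEdge (f i)) ∧
  (∀ i, f i ≠ f (i + 1) ∧ (f i ∩ f (i + 1)).Nonempty ∧
      ∃ F ∈ T.faces, f i ⊆ F ∧ f (i + 1) ⊆ F) ∧
  (∀ i, ∀ F ∈ T.faces, ∀ F' ∈ T.faces,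
      f i ⊆ F → f (i + 1) ⊆ F → f (i + 1) ⊆ F' → f (i + 2) ⊆ F' → F ≠ F') ∧
  (∀ i, f i ∩ f (i + 2) = ∅)

/-- A zigzag: a zigzag sequence together with its (minimal) period. -/
structure Zigzag where
  seq : ℕ → Finset V
  period : ℕ
  period_pos : 0 < period
  periodic : ∀ i, seq (i + period) = seq i
  period_min : ∀ m, 0 < m → (∀ i, seq (i + m) = seq i) → period ≤ m
  isZigzag : T.IsZigzagSeq seq

variable {T}

/-- Two zigzags are the same cyclic sequence (up to a shift). -/
def Zigzag.Equiv (Z Z' : T.Zigzag) : Prop := ∃ k, ∀ i, Z'.seq i = Z.seq (i + k)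

/-- `Z'` is the reversal of `Z` (up to a shift). -/
def Zigzag.IsReverseOf (Z' Z : T.Zigzag) : Prop :=
  ∃ k, ∀ i, Z'.seq i = Z.seq (k + Z.period - i % Z.period)

/-- The zigzag `Z` contains an edge of the face `F`. -/
def Zigzag.Meets (Z : T.Zigzag) (F : Finset V) : Prop := ∃ i, Z.seq i ⊆ F

/-- `F` is the `i`-th face of the face shadow of `Z`, i.e. the face containing
the `i`-th and `(i+1)`-st edges of `Z`. -/
def Zigzag.ShadowAt (Z : T.Zigzag) (i : ℕ) (F : Finset V) : Prop :=
  F ∈ T.faces ∧ Z.seq i ⊆ F ∧ Z.seq (i + 1) ⊆ F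

/-- At position `i`, the zigzag `Z` traverses the oriented edge from `x`
to `y` (the head `y` is the vertex shared with the next edge). -/
def Zigzag.Passes (Z : T.Zigzag) (i : ℕ) (x y : V) : Prop :=
  Z.seq i = {x, y} ∧ x ≠ y ∧ y ∈ Z.seq (i + 1)

variable (T)

/-- The triangulation is locally z-knotted in the face `F`:
`𝒵(F) = {Z, Z⁻¹}`. -/
def LocallyZKnotted (F : Finset V) : Prop :=
  (∃ Z : T.Zigzag, Z.Meets F) ∧
  ∀ Z Z' : T.Zigzag, Z.Meets F → Z'.Meets F → Z.Equiv Z' ∨ Z'.IsReverseOf Z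

/-- The triangulation is z-knotted: it has exactly one zigzag up to
reversal. -/
def ZKnotted : Prop :=
  Nonempty T.Zigzag ∧ ∀ Z Z' : T.Zigzag, Z.Equiv Z' ∨ Z'.IsReverseOf Z

/-- The z-monodromy relation of the face `F`: `M_F` sends the oriented edge
`(x,y)` of `F` to the oriented edge `(u,v)` of `F`.  Here `(u,v)` is the first
oriented edge of `F` occurring in the zigzag through `D_F⁻¹(x,y), (x,y)`
after `(x,y)`. -/
def MonodromyRel (F : Finset V) (x y u v : V) : Prop :=
  x ∈ F ∧ y ∈ F ∧
  ∃ Z : T.Zigzag, ∃ i j : ℕ,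
    (∃ z, z ∈ F ∧ z ≠ x ∧ z ≠ y ∧ Z.Passes i z x) ∧
    Z.Passes (i + 1) x y ∧
    i + 1 < j ∧ Z.Passes j u v ∧ u ∈ F ∧ v ∈ F ∧
    (∀ k, i + 1 < k → k < j → ∀ a b, a ∈ F → b ∈ F → ¬ Z.Passes k a b)

/-- The z-monodromy of `F` is the identity (type (M1)). -/
def MFIsId (F : Finset V) : Prop :=
  ∀ x y, x ∈ F → y ∈ F → x ≠ y → T.MonodromyRel F x y x y

/-- The z-monodromy of `F` is `D_F` (type (M2)). -/
def MFIsD (F : Finset V) : Prop :=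
  ∀ x y z : V, ({x, y, z} : Finset V) = F → x ≠ y → y ≠ z → x ≠ z →
    T.MonodromyRel F x y y z

/-- The z-monodromy of `F` is `D_F⁻¹` (type (M5)). -/
def MFIsDInv (F : Finset V) : Prop :=
  ∀ x y z : V, ({x, y, z} : Finset V) = F → x ≠ y → y ≠ z → x ≠ z →
    T.MonodromyRel F x y z x

/-- The z-monodromy of `F` is of type (M3):
`M_F = (-e₁,e₂,e₃)(-e₃,-e₂,e₁)` for a cycle `(e₁,e₂,e₃)` of `D_F`. -/
def MFIsM3 (F : Finset V) : Prop :=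
  ∃ x y z : V, ({x, y, z} : Finset V) = F ∧ x ≠ y ∧ y ≠ z ∧ x ≠ z ∧
    T.MonodromyRel F y x y z ∧ T.MonodromyRel F y z z x ∧
    T.MonodromyRel F z x y x ∧ T.MonodromyRel F x z z y ∧
    T.MonodromyRel F z y x y ∧ T.MonodromyRel F x y x z

/-- The z-monodromy of `F` is of type (M4):
`M_F = (e₁,-e₂)(e₂,-e₁)` with `e₃, -e₃` fixed, for a cycle `(e₁,e₂,e₃)`
of `D_F`. -/
def MFIsM4 (F : Finset V) : Prop :=
  ∃ x y z : V, ({x, y, z} : Finset V) = F ∧ x ≠ y ∧ y ≠ z ∧ x ≠ z ∧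
    T.MonodromyRel F x y z y ∧ T.MonodromyRel F z y x y ∧
    T.MonodromyRel F y z y x ∧ T.MonodromyRel F y x y z ∧
    T.MonodromyRel F z x z x ∧ T.MonodromyRel F x z x z

/-- The dual graph: vertices are faces, adjacent iff they share an edge. -/
def dualGraph : SimpleGraph {F : Finset V // F ∈ T.faces} where
  Adj A B := A ≠ B ∧ ((A : Finset V) ∩ (B : Finset V)).card = 2
  symm := by
    constructor
    intro A B h
    exact ⟨h.1.symm, by rw [Finset.inter_comm]; exact h.2⟩
  loopless := by constructor; intro A h; exact h.1 rfl

end Triangulation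

/-!
Two consecutive edges of a zigzag determine the next one: it lies in the other face through
the middle edge and avoids the first edge. The same holds backwards, so a zigzag read in
reverse is again a zigzag sequence. If `Z` passes `e, e'` at `i, i + 1` and `e', e` at
`j, j + 1`, then `Z` and its reversal `n ↦ Z (i + j + 1 - n)` agree at `j, j + 1`, hence
everywhere. But then `Z u = Z v` whenever `u + v = i + j + 1`, and taking `u, v` in the middle
either gives two equal consecutive edges or two equal edges at distance two, which a zigzag
cannot have.
-/

lemma Finset.eq_of_card_two_of_subset_of_disjoint {α : Type*} [DecidableEq α]
    {F s e e' : Finset α} (hF : F.card = 3) (hFs : (F ∩ s).Nonempty)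
    (he : e.card = 2) (he' : e'.card = 2) (heF : e ⊆ F) (he'F : e' ⊆ F)
    (hes : Disjoint e s) (he's : Disjoint e' s) : e = e' := by
  have hcard : (F \ s).card ≤ 2 := by
    have := Finset.card_sdiff_add_card_inter F s
    have := hFs.card_pos
    omega
  have eq_sdiff : ∀ d : Finset α, d.card = 2 → d ⊆ F → Disjoint d s → d = F \ s :=
    fun d hd hdF hds => Finset.eq_of_subset_of_card_le (Finset.subset_sdiff.mpr ⟨hdF, hds⟩)
      (hd ▸ hcard)
  rw [eq_sdiff e he heF hes, eq_sdiff e' he' he'F he's]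

namespace Triangulation

variable {V : Type} [Fintype V] [DecidableEq V] {T : Triangulation V}

lemma eq_of_edge_subset_of_ne {e F G H : Finset V} (he : e.card = 2)
    (hF : F ∈ T.faces) (hG : G ∈ T.faces) (hH : H ∈ T.faces)
    (heF : e ⊆ F) (heG : e ⊆ G) (heH : e ⊆ H) (hGF : G ≠ F) (hHF : H ≠ F) : G = H := by
  by_contra hGH
  have hsub : ({F, G, H} : Finset (Finset V)) ⊆ T.faces.filter fun K => e ⊆ K := by
    simp [Finset.insert_subset_iff, hF, hG, hH, heF, heG, heH]
  have h3 : ({F, G, H} : Finset (Finset V)).card = 3 :=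
    Finset.card_eq_three.mpr ⟨F, G, H, hGF.symm, hHF.symm, hGH, rfl⟩
  have := Finset.card_le_card hsub
  rw [h3, T.edge_two_faces e he ⟨F, hF, heF⟩] at this
  omega

namespace IsZigzagSeq

variable {f g : ℕ → Finset V}

lemma eq_add_two (hf : T.IsZigzagSeq f) (hg : T.IsZigzagSeq g) {n : ℕ}
    (h₀ : f n = g n) (h₁ : f (n + 1) = g (n + 1)) : f (n + 2) = g (n + 2) := by
  obtain ⟨edge_f, adj_f, face_f, disj_f⟩ := hf
  obtain ⟨edge_g, adj_g, face_g, disj_g⟩ := hg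
  obtain ⟨F, hF, hnF, hn1F⟩ := (adj_f n).2.2
  obtain ⟨F₁, hF₁, hf1, hf2⟩ := (adj_f (n + 1)).2.2
  obtain ⟨F₂, hF₂, hg1, hg2⟩ := (adj_g (n + 1)).2.2
  have hF₁F : F₁ ≠ F := (face_f n F hF F₁ hF₁ hnF hn1F hf1 hf2).symm
  have hF₂F : F₂ ≠ F :=
    (face_g n F hF F₂ hF₂ (h₀ ▸ hnF) (h₁ ▸ hn1F) hg1 hg2).symm
  have hF₁₂ : F₁ = F₂ :=
    eq_of_edge_subset_of_ne (edge_f (n + 1)).1 hF hF₁ hF₂ hn1F hf1 (h₁ ▸ hg1) hF₁F hF₂F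
  have hmeet : (F₁ ∩ f n).Nonempty := by
    obtain ⟨a, ha⟩ := (adj_f n).2.1
    rw [Finset.mem_inter] at ha
    exact ⟨a, Finset.mem_inter.mpr ⟨hf1 ha.2, ha.1⟩⟩
  refine Finset.eq_of_card_two_of_subset_of_disjoint (T.card_eq F₁ hF₁) hmeet
    (edge_f (n + 2)).1 (edge_g (n + 2)).1 hf2 (hF₁₂ ▸ hg2) ?_ ?_
  · rw [disjoint_comm, Finset.disjoint_iff_inter_eq_empty]
    exact disj_f n
  · rw [h₀, disjoint_comm, Finset.disjoint_iff_inter_eq_empty]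
    exact disj_g n

lemma eq_of_le (hf : T.IsZigzagSeq f) (hg : T.IsZigzagSeq g) {n : ℕ}
    (h₀ : f n = g n) (h₁ : f (n + 1) = g (n + 1)) : ∀ m, n ≤ m → f m = g m := by
  have pairs : ∀ k, f (n + k) = g (n + k) ∧ f (n + k + 1) = g (n + k + 1) := by
    intro k
    induction k with
    | zero => exact ⟨h₀, h₁⟩
    | succ k ih => exact ⟨ih.2, hf.eq_add_two hg ih.1 ih.2⟩
  intro m hm
  obtain ⟨k, rfl⟩ := Nat.exists_eq_add_of_le hm
  exact (pairs k).1

lemma of_reverse (hf : T.IsZigzagSeq f)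
    (hgf : ∀ n, ∃ m, g n = f (m + 2) ∧ g (n + 1) = f (m + 1) ∧ g (n + 2) = f m) :
    T.IsZigzagSeq g := by
  obtain ⟨edge_f, adj_f, face_f, disj_f⟩ := hf
  refine ⟨fun n => ?_, fun n => ?_, fun n F hF F' hF' h₀ h₁ h₁' h₂' => ?_, fun n => ?_⟩
  · obtain ⟨m, hm, -, -⟩ := hgf n
    exact hm ▸ edge_f (m + 2)
  · obtain ⟨m, hm₀, hm₁, -⟩ := hgf n
    obtain ⟨hne, ⟨a, ha⟩, F, hF, h₁, h₂⟩ := adj_f (m + 1)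
    rw [hm₀, hm₁]
    exact ⟨Ne.symm hne, ⟨a, by rwa [Finset.inter_comm]⟩, F, hF, h₂, h₁⟩
  · obtain ⟨m, hm₀, hm₁, hm₂⟩ := hgf n
    rw [hm₀] at h₀
    rw [hm₁] at h₁ h₁'
    rw [hm₂] at h₂'
    exact (face_f m F' hF' F hF h₂' h₁' h₁ h₀).symm
  · obtain ⟨m, hm₀, -, hm₂⟩ := hgf n
    rw [hm₀, hm₂, Finset.inter_comm]
    exact disj_f m

lemma exists_add_eq_ne (hf : T.IsZigzagSeq f) {w : ℕ} (hw : 1 ≤ w) :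
    ∃ u v, u + v = w ∧ f u ≠ f v := by
  obtain ⟨c, rfl | rfl⟩ := Nat.even_or_odd' w
  · refine ⟨c - 1, c + 1, by omega, fun h => ?_⟩
    have hdisj := hf.2.2.2 (c - 1)
    rw [show c - 1 + 2 = c + 1 by omega, ← h, Finset.inter_self] at hdisj
    simpa [hdisj] using (hf.1 (c - 1)).1
  · exact ⟨c, c + 1, by omega, (hf.2.1 c).1⟩

end IsZigzagSeq

namespace Zigzag

lemma seq_add_period_mul (Z : T.Zigzag) (n k : ℕ) : Z.seq (n + Z.period * k) = Z.seq n := by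
  induction k with
  | zero => simp
  | succ k ih => rw [Nat.mul_succ, ← Nat.add_assoc, Z.periodic, ih]

/-- Since `(Z.period - 1) * n ≡ -n`, this is `n ↦ Z.seq (c - n)` with indices read modulo the
period. -/
def reverseSeq (Z : T.Zigzag) (c n : ℕ) : Finset V := Z.seq (c + (Z.period - 1) * n)

lemma reverseSeq_eq (Z : T.Zigzag) {c m n k : ℕ} (h : m + n = c + Z.period * k) :
    Z.reverseSeq c n = Z.seq m := by
  obtain ⟨q, hq⟩ : ∃ q, Z.period = q + 1 := ⟨Z.period - 1, by have := Z.period_pos; omega⟩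
  calc Z.reverseSeq c n = Z.seq (c + (Z.period - 1) * n + Z.period * k) :=
        (Z.seq_add_period_mul _ k).symm
    _ = Z.seq (m + Z.period * n) := by
        congr 1
        rw [hq] at h ⊢
        simp only [Nat.add_sub_cancel]
        linarith
    _ = Z.seq m := Z.seq_add_period_mul m n

lemma isZigzagSeq_reverseSeq (Z : T.Zigzag) (c : ℕ) : T.IsZigzagSeq (Z.reverseSeq c) := by
  obtain ⟨q, hq⟩ : ∃ q, Z.period = q + 1 := ⟨Z.period - 1, by have := Z.period_pos; omega⟩
  refine Z.isZigzag.of_reverse fun n => ⟨c + (Z.period - 1) * (n + 2), ?_, ?_, rfl⟩ <;>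
    refine Z.reverseSeq_eq (k := n + 2) ?_ <;>
    · rw [hq, Nat.add_sub_cancel]
      ring

theorem not_reversed_pair (Z : T.Zigzag) (i j : ℕ) :
    ¬ (Z.seq j = Z.seq (i + 1) ∧ Z.seq (j + 1) = Z.seq i) := by
  rintro ⟨hj, hj1⟩
  have hagree : ∀ n, j ≤ n → Z.seq n = Z.reverseSeq (i + j + 1) n :=
    Z.isZigzag.eq_of_le (Z.isZigzagSeq_reverseSeq _)
      (hj.trans (Z.reverseSeq_eq (k := 0) (by omega)).symm)
      (hj1.trans (Z.reverseSeq_eq (k := 0) (by omega)).symm)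
  obtain ⟨u, v, huv, hne⟩ := Z.isZigzag.exists_add_eq_ne (w := i + j + 1) (by omega)
  refine hne ?_
  calc Z.seq u = Z.seq (u + Z.period * j) := (Z.seq_add_period_mul u j).symm
    _ = Z.reverseSeq (i + j + 1) (u + Z.period * j) :=
        hagree _ (le_add_left (Nat.le_mul_of_pos_left j Z.period_pos))
    _ = Z.seq v := Z.reverseSeq_eq (k := j) (by omega)

end Zigzag

end Triangulation

/-- no zigzag contains a subsequence `e, e', …, e', e`;
consequently no zigzag is self-reversed. -/
theorem zigzag_not_self_reversed {V : Type} [Fintype V] [DecidableEq V]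
    (T : Triangulation V) :
    (∀ Z : T.Zigzag, ∀ i j : ℕ, i < j →
      ¬ (Z.seq j = Z.seq (i + 1) ∧ Z.seq (j + 1) = Z.seq i)) ∧
    (∀ Z : T.Zigzag, ¬ Z.IsReverseOf Z) := by
  refine ⟨fun Z i j _ => Z.not_reversed_pair i j, fun Z ⟨k, hk⟩ => ?_⟩
  have hpos := Z.period_pos
  have h₀ : Z.seq 0 = Z.seq k := by simpa [Z.periodic] using hk 0
  have hlast : Z.seq (Z.period - 1) = Z.seq (k + 1) := by
    rw [hk, Nat.mod_eq_of_lt (by omega), show k + Z.period - (Z.period - 1) = k + 1 by omega]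
  refine Z.not_reversed_pair (Z.period - 1) k ⟨?_, hlast.symm⟩
  rw [← h₀, show Z.period - 1 + 1 = 0 + Z.period by omega, Z.periodic]
end

section
/- For every face F of a triangulation, the z-monodromy M_F is a well-defined permutation of the six oriented edges Ω(F) of F. -/
open Finset

/-!
Two consecutive edges of a zigzag determine both the next edge (the face across the second
edge, minus the vertex shared by the two) and the previous one, so zigzags can be run forwards
and backwards. The pair of edges `D_F⁻¹(e), e` therefore determines where the zigzag next
returns to `F`, which gives uniqueness of `M_F(e)`; it does return since zigzags are periodic.
A zigzag meets a face in consecutive pairs of edges, so the edge after `M_F(e)` also lies in `F`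
and is determined by `M_F(e)`; running the zigzag backwards from these two edges recovers `e`.
-/

namespace Finset

variable {α : Type*} [DecidableEq α] {s t G : Finset α} {a b : α}

lemma pair_subset (ha : a ∈ s) (hb : b ∈ s) : {a, b} ⊆ s :=
  insert_subset ha (singleton_subset_iff.2 hb)

lemma card_inter_le_one_of_card_eq_two (hs : s.card = 2) (ht : t.card = 2) (hst : s ≠ t) :
    (s ∩ t).card ≤ 1 := by
  by_contra! h
  have hs' : s ∩ t = s := eq_of_subset_of_card_le inter_subset_left (by omega)
  have ht' : s ∩ t = t := eq_of_subset_of_card_le inter_subset_right (by omega)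
  exact hst (hs'.symm.trans ht')

lemma eq_union_of_card_eq_two (hs : s.card = 2) (ht : t.card = 2) (hst : s ≠ t)
    (hsG : s ⊆ G) (htG : t ⊆ G) (hG : G.card = 3) : G = s ∪ t := by
  have hts : ¬ t ⊆ s := fun h => hst (eq_of_subset_of_card_le h (by omega)).symm
  have : s.card < (s ∪ t).card := card_lt_card <|
    ssubset_iff_subset_ne.2 ⟨subset_union_left, fun h => hts (h ▸ subset_union_right)⟩
  exact (eq_of_subset_of_card_le (union_subset hsG htG) (by omega)).symm

lemma eq_erase_of_subset_of_notMem (hs : s ⊆ G) (ha : a ∈ G) (has : a ∉ s)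
    (hcard : G.card ≤ s.card + 1) : s = G.erase a :=
  eq_of_subset_of_card_le (subset_erase.2 ⟨hs, has⟩) (by rw [card_erase_of_mem ha]; omega)

lemma exists_eq_pair_of_mem (hs : s.card = 2) (ha : a ∈ s) : ∃ b, b ≠ a ∧ s = {b, a} := by
  obtain ⟨b, hb, hba⟩ := exists_mem_ne (by omega : 1 < s.card) a
  exact ⟨b, hba, (eq_of_subset_of_card_le (pair_subset hb ha) (by rw [card_pair hba, hs])).symm⟩

end Finset

namespace Triangulation

variable {V : Type} [Fintype V] [DecidableEq V] {T : Triangulation V}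

lemma eq_of_edges_subset {e e' G G' : Finset V} (he : e.card = 2) (he' : e'.card = 2)
    (hne : e ≠ e') (hG : G ∈ T.faces) (hG' : G' ∈ T.faces)
    (heG : e ⊆ G) (he'G : e' ⊆ G) (heG' : e ⊆ G') (he'G' : e' ⊆ G') : G = G' :=
  (eq_union_of_card_eq_two he he' hne heG he'G (T.card_eq G hG)).trans
    (eq_union_of_card_eq_two he he' hne heG' he'G' (T.card_eq G' hG')).symm

lemma face_eq_of_ne_of_ne {e G₁ G₂ G₃ : Finset V} (he : T.IsEdge e)
    (hG₁ : G₁ ∈ T.faces) (hG₂ : G₂ ∈ T.faces) (hG₃ : G₃ ∈ T.faces)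
    (h₁ : e ⊆ G₁) (h₂ : e ⊆ G₂) (h₃ : e ⊆ G₃) (h₁₃ : G₁ ≠ G₃) (h₂₃ : G₂ ≠ G₃) : G₁ = G₂ := by
  by_contra h₁₂
  have hsub : {G₁, G₂, G₃} ⊆ T.faces.filter (e ⊆ ·) := by
    simp only [insert_subset_iff, singleton_subset_iff, mem_filter]
    exact ⟨⟨hG₁, h₁⟩, ⟨hG₂, h₂⟩, ⟨hG₃, h₃⟩⟩
  have := card_le_card hsub
  rw [T.edge_two_faces e he.1 he.2, card_eq_three.2 ⟨_, _, _, h₁₂, h₁₃, h₂₃, rfl⟩] at this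
  omega

lemma exists_face_ne {e : Finset V} (he : T.IsEdge e) (G : Finset V) :
    ∃ G' ∈ T.faces, G' ≠ G ∧ e ⊆ G' := by
  have h2 : 1 < (T.faces.filter (e ⊆ ·)).card := by rw [T.edge_two_faces e he.1 he.2]; omega
  obtain ⟨G', hG', hne⟩ := exists_mem_ne h2 G
  exact ⟨G', (mem_filter.1 hG').1, hne, (mem_filter.1 hG').2⟩

variable (T) in
structure AdjEdges (a b : Finset V) : Prop where
  isEdge_left : T.IsEdge a
  isEdge_right : T.IsEdge b
  ne : a ≠ b
  inter_nonempty : (a ∩ b).Nonempty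
  exists_face : ∃ G ∈ T.faces, a ⊆ G ∧ b ⊆ G

variable (T) in
structure IsZigzagTriple (a b c : Finset V) : Prop where
  adj_left : T.AdjEdges a b
  adj_right : T.AdjEdges b c
  faces_ne : ∀ G ∈ T.faces, ∀ G' ∈ T.faces, a ⊆ G → b ⊆ G → b ⊆ G' → c ⊆ G' → G ≠ G'
  inter_eq_empty : a ∩ c = ∅

lemma AdjEdges.symm {a b : Finset V} (h : T.AdjEdges a b) : T.AdjEdges b a :=
  ⟨h.isEdge_right, h.isEdge_left, h.ne.symm, inter_comm a b ▸ h.inter_nonempty,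
    let ⟨G, hG, ha, hb⟩ := h.exists_face; ⟨G, hG, hb, ha⟩⟩

lemma IsZigzagTriple.symm {a b c : Finset V} (h : T.IsZigzagTriple a b c) :
    T.IsZigzagTriple c b a :=
  ⟨h.adj_right.symm, h.adj_left.symm,
    fun G hG G' hG' hc hb hb' ha heq => h.faces_ne G' hG' G hG ha hb' hb hc heq.symm,
    inter_comm c a ▸ h.inter_eq_empty⟩

/-- `a` is the face `G` through `b` other than the face of `b, c`, minus a vertex of `b ∩ c`. -/
lemma IsZigzagTriple.left_unique {a a' b c : Finset V} (h : T.IsZigzagTriple a b c)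
    (h' : T.IsZigzagTriple a' b c) : a = a' := by
  obtain ⟨v, hv⟩ := h.adj_right.inter_nonempty
  obtain ⟨G, hG, haG, hbG⟩ := h.adj_left.exists_face
  obtain ⟨G', hG', ha'G', hbG'⟩ := h'.adj_left.exists_face
  obtain ⟨H, hH, hbH, hcH⟩ := h.adj_right.exists_face
  have hGG' : G = G' := face_eq_of_ne_of_ne h.adj_left.isEdge_right hG hG' hH hbG hbG' hbH
    (h.faces_ne G hG H hH haG hbG hbH hcH) (h'.faces_ne G' hG' H hH ha'G' hbG' hbH hcH)
  have key : ∀ a₀, a₀ ⊆ G → T.IsZigzagTriple a₀ b c → a₀ = G.erase v := fun a₀ ha₀ h₀ =>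
    eq_erase_of_subset_of_notMem ha₀ (hbG (mem_inter.1 hv).1)
      (fun hva => (eq_empty_iff_forall_notMem.1 h₀.inter_eq_empty) v
        (mem_inter.2 ⟨hva, (mem_inter.1 hv).2⟩))
      (by rw [T.card_eq G hG, h₀.adj_left.isEdge_left.1])
  exact (key a haG h).trans (key a' (hGG' ▸ ha'G') h').symm

lemma IsZigzagTriple.right_unique {a b c c' : Finset V} (h : T.IsZigzagTriple a b c)
    (h' : T.IsZigzagTriple a b c') : c = c' :=
  h.symm.left_unique h'.symm

lemma exists_isZigzagTriple {a b : Finset V} (h : T.AdjEdges a b) :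
    ∃ c, T.IsZigzagTriple a b c := by
  obtain ⟨p, hp⟩ := h.inter_nonempty
  obtain ⟨G, hG, haG, hbG⟩ := h.exists_face
  obtain ⟨G', hG', hG'G, hbG'⟩ := exists_face_ne h.isEdge_right G
  have hb := h.isEdge_right.1
  have hpG' : p ∈ G' := hbG' (mem_inter.1 hp).2
  have hcG' : G'.erase p ⊆ G' := erase_subset p G'
  have hcard : (G'.erase p).card = 2 := by rw [card_erase_of_mem hpG', T.card_eq G' hG']
  have hGG' : G ∩ G' = b := (eq_of_subset_of_card_le (subset_inter hbG hbG')
    (hb ▸ T.inter_le G hG G' hG' hG'G.symm)).symm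
  obtain ⟨q, hqb, hqp⟩ := exists_mem_ne (by omega : 1 < b.card) p
  have hbc : T.AdjEdges b (G'.erase p) :=
    ⟨h.isEdge_right, ⟨hcard, G', hG', hcG'⟩, fun he => notMem_erase p G' (he ▸ (mem_inter.1 hp).2),
      ⟨q, mem_inter.2 ⟨hqb, mem_erase.2 ⟨hqp, hbG' hqb⟩⟩⟩, G', hG', hbG', hcG'⟩
  refine ⟨G'.erase p, h, hbc, fun H hH H' hH' haH hbH hbH' hcH' hHH' => ?_, ?_⟩
  · have hH'G' : H' = G' := eq_of_edges_subset hb hcard hbc.ne hH' hG' hbH' hcH' hbG' hcG'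
    have hHG : H = G := eq_of_edges_subset h.isEdge_left.1 hb h.ne hH hG haH hbH haG hbG
    exact hG'G (hH'G' ▸ hHG ▸ hHH'.symm)
  · refine eq_empty_iff_forall_notMem.2 fun x hx => ?_
    obtain ⟨hxa, hxc⟩ := mem_inter.1 hx
    obtain ⟨hxp, hxG'⟩ := mem_erase.1 hxc
    have hxb : x ∈ b := hGG' ▸ mem_inter.2 ⟨haG hxa, hxG'⟩
    exact hxp (card_le_one.1 (card_inter_le_one_of_card_eq_two h.isEdge_left.1 hb h.ne)
      x (mem_inter.2 ⟨hxa, hxb⟩) p hp)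

end Triangulation

namespace Triangulation.Zigzag

variable {V : Type} [Fintype V] [DecidableEq V] {T : Triangulation V} {Z Z' : T.Zigzag}

lemma isZigzagTriple (Z : T.Zigzag) (i : ℕ) :
    T.IsZigzagTriple (Z.seq i) (Z.seq (i + 1)) (Z.seq (i + 2)) :=
  have adj : ∀ j, T.AdjEdges (Z.seq j) (Z.seq (j + 1)) := fun j =>
    let ⟨hne, hint, hface⟩ := Z.isZigzag.2.1 j
    ⟨Z.isZigzag.1 j, Z.isZigzag.1 (j + 1), hne, hint, hface⟩
  ⟨adj i, adj (i + 1), Z.isZigzag.2.2.1 i, Z.isZigzag.2.2.2 i⟩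

def pair (Z : T.Zigzag) (i : ℕ) : Finset V × Finset V := (Z.seq i, Z.seq (i + 1))

lemma pair_succ_eq_iff {i k : ℕ} : Z.pair (i + 1) = Z'.pair (k + 1) ↔ Z.pair i = Z'.pair k := by
  simp only [pair, Prod.mk.injEq]
  constructor
  · rintro ⟨h₁, h₂⟩
    refine ⟨(Z.isZigzagTriple i).left_unique ?_, h₁⟩
    rw [h₁, h₂]
    exact Z'.isZigzagTriple k
  · rintro ⟨h₀, h₁⟩
    refine ⟨h₁, (Z.isZigzagTriple i).right_unique ?_⟩
    rw [h₀, h₁]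
    exact Z'.isZigzagTriple k

lemma pair_add_eq_iff {i k : ℕ} (d : ℕ) :
    Z.pair (i + d) = Z'.pair (k + d) ↔ Z.pair i = Z'.pair k := by
  induction d with
  | zero => rfl
  | succ d ih => exact pair_succ_eq_iff.trans ih

lemma exists_passes (Z : T.Zigzag) (i : ℕ) : ∃ u v, Z.Passes i u v := by
  obtain ⟨v, hv⟩ := (Z.isZigzagTriple i).adj_left.inter_nonempty
  obtain ⟨u, huv, hu⟩ := exists_eq_pair_of_mem (Z.isZigzag.1 i).1 (mem_inter.1 hv).1
  exact ⟨u, v, hu, huv, (mem_inter.1 hv).2⟩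

lemma Passes.eq_of_pair_eq {i k : ℕ} {u v u' v' : V} (hZ : Z.pair i = Z'.pair k)
    (h : Z.Passes i u v) (h' : Z'.Passes k u' v') : u = u' ∧ v = v' := by
  simp only [pair, Prod.mk.injEq] at hZ
  have hv : v = v' := card_le_one.1 (card_inter_le_one_of_card_eq_two (Z.isZigzag.1 i).1
    (Z.isZigzag.1 (i + 1)).1 (Z.isZigzagTriple i).adj_left.ne)
    v (mem_inter.2 ⟨by simp [h.1], h.2.2⟩) v' (by rw [hZ.1, hZ.2]; simp [h'.1, h'.2.2])
  subst hv
  have hu : u ∈ ({u', v} : Finset V) := h'.1 ▸ hZ.1 ▸ h.1 ▸ mem_insert_self u {v}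
  simp only [mem_insert, mem_singleton] at hu
  exact ⟨hu.resolve_right h.2.1, rfl⟩

lemma Passes.succ {i : ℕ} {u v w : V} (h : Z.Passes i u v) (hw : Z.seq (i + 1) = {v, w}) :
    Z.Passes (i + 1) v w := by
  have hvw : v ≠ w := fun hvw => by
    have := (Z.isZigzag.1 (i + 1)).1
    simp [hw, hvw] at this
  refine ⟨hw, hvw, ?_⟩
  obtain ⟨x, hx⟩ := (Z.isZigzagTriple (i + 1)).adj_left.inter_nonempty
  obtain ⟨hx₁, hx₂⟩ := mem_inter.1 hx
  have hxv : x ≠ v := fun hxv => (eq_empty_iff_forall_notMem.1 (Z.isZigzagTriple i).inter_eq_empty)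
    x (mem_inter.2 ⟨by simp [h.1, hxv], hx₂⟩)
  rw [hw, mem_insert, mem_singleton] at hx₁
  exact hx₁.resolve_left hxv ▸ hx₂

lemma forall_not_passes_iff {F : Finset V} {k : ℕ} :
    (∀ a b, a ∈ F → b ∈ F → ¬ Z.Passes k a b) ↔ ¬ Z.seq k ⊆ F := by
  constructor
  · intro h hk
    obtain ⟨a, b, hab⟩ := Z.exists_passes k
    exact h a b (hk (by simp [hab.1])) (hk (by simp [hab.1])) hab
  · intro h a b ha hb hab
    exact h (hab.1 ▸ pair_subset ha hb)

lemma seq_add_two_subset {F : Finset V} (hF : F ∈ T.faces) {k : ℕ} (hk : ¬ Z.seq k ⊆ F)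
    (hk₁ : Z.seq (k + 1) ⊆ F) : Z.seq (k + 2) ⊆ F := by
  have h := Z.isZigzagTriple k
  obtain ⟨G, hG, hkG, hk₁G⟩ := h.adj_left.exists_face
  obtain ⟨G', hG', hk₁G', hk₂G'⟩ := h.adj_right.exists_face
  have hG'F : G' = F := face_eq_of_ne_of_ne h.adj_right.isEdge_left hG' hF hG hk₁G' hk₁ hk₁G
    (h.faces_ne G hG G' hG' hkG hk₁G hk₁G' hk₂G').symm (by rintro rfl; exact hk hkG)
  exact hG'F ▸ hk₂G'

end Triangulation.Zigzag

namespace Triangulation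

variable {V : Type} [Fintype V] [DecidableEq V] {T : Triangulation V}

lemma isZigzagSeq_of_isZigzagTriple {f : ℕ → Finset V}
    (h : ∀ i, T.IsZigzagTriple (f i) (f (i + 1)) (f (i + 2))) : T.IsZigzagSeq f :=
  ⟨fun i => (h i).adj_left.isEdge_left,
    fun i => ⟨(h i).adj_left.ne, (h i).adj_left.inter_nonempty, (h i).adj_left.exists_face⟩,
    fun i => (h i).faces_ne, fun i => (h i).inter_eq_empty⟩

variable (T) in
noncomputable def zigzagStep (p : {p : Finset V × Finset V // T.AdjEdges p.1 p.2}) :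
    {p : Finset V × Finset V // T.AdjEdges p.1 p.2} :=
  ⟨(p.1.2, (exists_isZigzagTriple p.2).choose), (exists_isZigzagTriple p.2).choose_spec.adj_right⟩

lemma zigzagStep_injective : Function.Injective T.zigzagStep := by
  rintro ⟨⟨a, b⟩, hab⟩ ⟨⟨a', b'⟩, hab'⟩ h
  simp only [zigzagStep, Subtype.mk.injEq, Prod.mk.injEq] at h
  obtain ⟨rfl, hc⟩ := h
  have ha : a = a' := (exists_isZigzagTriple hab).choose_spec.left_unique
    (hc ▸ (exists_isZigzagTriple hab').choose_spec)
  subst ha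
  rfl

noncomputable def zigzagSeq {a b : Finset V} (h : T.AdjEdges a b) (n : ℕ) : Finset V :=
  (T.zigzagStep^[n] ⟨(a, b), h⟩).1.1

lemma zigzagSeq_isZigzagTriple {a b : Finset V} (h : T.AdjEdges a b) (n : ℕ) :
    T.IsZigzagTriple (zigzagSeq h n) (zigzagSeq h (n + 1)) (zigzagSeq h (n + 2)) := by
  simp only [zigzagSeq, Function.iterate_succ_apply']
  exact (exists_isZigzagTriple (T.zigzagStep^[n] ⟨(a, b), h⟩).2).choose_spec

lemma exists_periodic_zigzagSeq {a b : Finset V} (h : T.AdjEdges a b) :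
    ∃ m, 0 < m ∧ Function.Periodic (zigzagSeq h) m := by
  obtain ⟨m, hm, hper⟩ := zigzagStep_injective.mem_periodicPts ⟨(a, b), h⟩
  refine ⟨m, hm, fun i => ?_⟩
  rw [zigzagSeq, Function.iterate_add_apply, hper.eq, zigzagSeq]

open Classical in
noncomputable def zigzagOfAdj {a b : Finset V} (h : T.AdjEdges a b) : T.Zigzag where
  seq := zigzagSeq h
  period := Nat.find (exists_periodic_zigzagSeq h)
  period_pos := (Nat.find_spec (exists_periodic_zigzagSeq h)).1
  periodic := (Nat.find_spec (exists_periodic_zigzagSeq h)).2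
  period_min _ hm hper := Nat.find_min' _ ⟨hm, hper⟩
  isZigzag := isZigzagSeq_of_isZigzagTriple (zigzagSeq_isZigzagTriple h)

end Triangulation

lemma Nat.eq_of_first_of_iff {p q : ℕ → Prop} {m n : ℕ} (hm : p m) (hn : q n)
    (hpm : ∀ k < m, ¬ p k) (hqn : ∀ k < n, ¬ q k) (hpq : ∀ k ≤ m, k ≤ n → (p k ↔ q k)) :
    m = n := by
  rcases lt_trichotomy m n with h | h | h
  · exact absurd ((hpq m le_rfl h.le).1 hm) (hqn m h)
  · exact h
  · exact absurd ((hpq n h.le le_rfl).2 hn) (hpm n h)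

namespace Triangulation.Zigzag

variable {V : Type} [Fintype V] [DecidableEq V] {T : Triangulation V} {Z Z' : T.Zigzag}
  {F : Finset V} {a b a' b' : ℕ}

def IsNextVisit (Z : T.Zigzag) (F : Finset V) (a b : ℕ) : Prop :=
  a < b ∧ Z.seq a ⊆ F ∧ Z.seq b ⊆ F ∧ ∀ k, a < k → k < b → ¬ Z.seq k ⊆ F

lemma IsNextVisit.pair_eq_of_pair_eq_left (h : Z.IsNextVisit F a b) (h' : Z'.IsNextVisit F a' b')
    (hpair : Z.pair a = Z'.pair a') : Z.pair b = Z'.pair b' := by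
  obtain ⟨hab, -, hb, hgap⟩ := h
  obtain ⟨hab', -, hb', hgap'⟩ := h'
  have hagree : ∀ d, Z.pair (a + 1 + d) = Z'.pair (a' + 1 + d) :=
    fun d => (pair_add_eq_iff d).2 (pair_succ_eq_iff.2 hpair)
  have hlen : b - (a + 1) = b' - (a' + 1) := by
    refine Nat.eq_of_first_of_iff (p := fun d => Z.seq (a + 1 + d) ⊆ F)
      (q := fun d => Z'.seq (a' + 1 + d) ⊆ F) ?_ ?_ ?_ ?_ ?_
    · simpa only [Nat.add_sub_of_le hab] using hb
    · simpa only [Nat.add_sub_of_le hab'] using hb'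
    · exact fun k hk => hgap _ (by omega) (by omega)
    · exact fun k hk => hgap' _ (by omega) (by omega)
    · exact fun k _ _ => iff_of_eq (congrArg (fun P => P.1 ⊆ F) (hagree k))
  rw [← Nat.add_sub_of_le hab, ← Nat.add_sub_of_le hab', hlen]
  exact hagree _

lemma IsNextVisit.pair_eq_of_pair_eq_right (h : Z.IsNextVisit F a b)
    (h' : Z'.IsNextVisit F a' b') (hpair : Z.pair b = Z'.pair b') : Z.pair a = Z'.pair a' := by
  obtain ⟨hab, ha, -, hgap⟩ := h
  obtain ⟨hab', ha', -, hgap'⟩ := h'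
  have hagree : ∀ d ≤ b, d ≤ b' → Z.pair (b - d) = Z'.pair (b' - d) := fun d hd hd' =>
    (pair_add_eq_iff d).1 (by rwa [Nat.sub_add_cancel hd, Nat.sub_add_cancel hd'])
  have hlen : b - a - 1 = b' - a' - 1 := by
    refine Nat.eq_of_first_of_iff (p := fun d => Z.seq (b - (d + 1)) ⊆ F)
      (q := fun d => Z'.seq (b' - (d + 1)) ⊆ F) ?_ ?_ ?_ ?_ ?_
    · simpa only [show b - (b - a - 1 + 1) = a by omega] using ha
    · simpa only [show b' - (b' - a' - 1 + 1) = a' by omega] using ha'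
    · exact fun k hk => hgap _ (by omega) (by omega)
    · exact fun k hk => hgap' _ (by omega) (by omega)
    · exact fun k hk hk' =>
        iff_of_eq (congrArg (fun P => P.1 ⊆ F) (hagree (k + 1) (by omega) (by omega)))
  have := hagree (b - a) (by omega) (by omega)
  rwa [Nat.sub_sub_self hab.le, show b - a = b' - a' by omega, Nat.sub_sub_self hab'.le] at this

lemma IsNextVisit.seq_succ_subset (hF : F ∈ T.faces) {i j : ℕ} (h : Z.IsNextVisit F (i + 1) j)
    (hi : Z.seq i ⊆ F) : Z.seq (j + 1) ⊆ F := by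
  obtain ⟨hij, hi₁, hj, hgap⟩ := h
  obtain ⟨k, rfl⟩ : ∃ k, j = k + 1 := ⟨j - 1, by omega⟩
  by_cases hk : Z.seq k ⊆ F
  · exfalso
    rcases (by omega : k = i + 1 ∨ i + 1 < k) with rfl | hik
    · exact (Z.isZigzagTriple i).faces_ne F hF F hF hi hi₁ hi₁ hj rfl
    · exact hgap k hik (by omega) hk
  · exact seq_add_two_subset hF hk hj

end Triangulation.Zigzag

namespace Triangulation

variable {V : Type} [Fintype V] [DecidableEq V] {T : Triangulation V} {F : Finset V}
  {x y x' y' u v u' v' : V}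

open Zigzag

lemma MonodromyRel.exists_zigzag (hF : F ∈ T.faces) (h : T.MonodromyRel F x y u v) :
    ∃ (Z : T.Zigzag) (i j : ℕ), Z.pair i = (F.erase y, {x, y}) ∧ Z.Passes (i + 1) x y ∧
      Z.IsNextVisit F (i + 1) j ∧ Z.Passes j u v ∧ Z.pair j = ({u, v}, F.erase u) := by
  obtain ⟨hx, hy, Z, i, j, ⟨z, hz, hzx, hzy, hpi⟩, hpi₁, hij, hpj, hu, hv, hgap⟩ := h
  have hF3 := T.card_eq F hF
  have hi : Z.seq i = F.erase y := hpi.1.trans <| eq_erase_of_subset_of_notMem (pair_subset hz hx)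
    hy (by simp [hzy.symm, hpi₁.2.1.symm]) (by rw [card_pair hpi.2.1, hF3])
  have hvisit : Z.IsNextVisit F (i + 1) j := ⟨hij, hpi₁.1 ▸ pair_subset hx hy,
    hpj.1 ▸ pair_subset hu hv, fun k hk hkj => forall_not_passes_iff.1 (hgap k hk hkj)⟩
  have hj₁ : Z.seq (j + 1) = F.erase u := by
    refine eq_erase_of_subset_of_notMem (hvisit.seq_succ_subset hF (hi ▸ erase_subset y F)) hu
      (fun hu₁ => (Z.isZigzagTriple j).adj_left.ne ?_) (by rw [hF3, (Z.isZigzag.1 (j + 1)).1])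
    exact eq_of_subset_of_card_le (hpj.1 ▸ pair_subset hu₁ hpj.2.2)
      (by rw [(Z.isZigzag.1 j).1, (Z.isZigzag.1 (j + 1)).1])
  exact ⟨Z, i, j, Prod.ext hi hpi₁.1, hpi₁, hvisit, hpj, Prod.ext hpj.1 hj₁⟩

lemma MonodromyRel.right_unique (hF : F ∈ T.faces) (h : T.MonodromyRel F x y u v)
    (h' : T.MonodromyRel F x y u' v') : u = u' ∧ v = v' := by
  obtain ⟨Z, i, j, hi, -, hvisit, hj, -⟩ := h.exists_zigzag hF
  obtain ⟨Z', i', j', hi', -, hvisit', hj', -⟩ := h'.exists_zigzag hF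
  exact hj.eq_of_pair_eq
    (hvisit.pair_eq_of_pair_eq_left hvisit' (pair_succ_eq_iff.2 (hi.trans hi'.symm))) hj'

lemma MonodromyRel.left_unique (hF : F ∈ T.faces) (h : T.MonodromyRel F x y u v)
    (h' : T.MonodromyRel F x' y' u v) : x = x' ∧ y = y' := by
  obtain ⟨Z, i, j, -, hi, hvisit, -, hj⟩ := h.exists_zigzag hF
  obtain ⟨Z', i', j', -, hi', hvisit', -, hj'⟩ := h'.exists_zigzag hF
  exact hi.eq_of_pair_eq (hvisit.pair_eq_of_pair_eq_right hvisit' (hj.trans hj'.symm)) hi'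

lemma exists_monodromyRel (hF : F ∈ T.faces) (hx : x ∈ F) (hy : y ∈ F) (hxy : x ≠ y) :
    ∃ u v, T.MonodromyRel F x y u v := by
  classical
  obtain ⟨z, hz, hzxy⟩ := exists_mem_notMem_of_card_lt_card
    (by rw [card_pair hxy, T.card_eq F hF]; omega : ({x, y} : Finset V).card < F.card)
  simp only [mem_insert, mem_singleton, not_or] at hzxy
  obtain ⟨hzx, hzy⟩ := hzxy
  have hadj : T.AdjEdges {z, x} {x, y} :=
    ⟨⟨card_pair hzx, F, hF, pair_subset hz hx⟩, ⟨card_pair hxy, F, hF, pair_subset hx hy⟩,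
      fun he => by
        have hy' : y ∈ ({x, y} : Finset V) := by simp
        simp [← he, Ne.symm hzy, Ne.symm hxy] at hy',
      ⟨x, by simp⟩, F, hF, pair_subset hz hx, pair_subset hx hy⟩
  set Z := zigzagOfAdj hadj
  have hp₀ : Z.Passes 0 z x := ⟨rfl, hzx, show x ∈ ({x, y} : Finset V) by simp⟩
  have hret : ∃ k, 1 < k ∧ Z.seq k ⊆ F :=
    ⟨1 + Z.period, by have := Z.period_pos; omega, by rw [Z.periodic]; exact pair_subset hx hy⟩
  obtain ⟨hj, hjF⟩ := Nat.find_spec hret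
  obtain ⟨u, v, hpj⟩ := Z.exists_passes (Nat.find hret)
  refine ⟨u, v, hx, hy, Z, 0, Nat.find hret, ⟨z, hz, hzx, hzy, hp₀⟩, hp₀.succ rfl, hj, hpj,
    hjF (by simp [hpj.1]), hjF (by simp [hpj.1]), fun k hk hkj => ?_⟩
  exact forall_not_passes_iff.2 fun hkF => Nat.find_min hret hkj ⟨hk, hkF⟩

end Triangulation

/-- the z-monodromy `M_F` is a well-defined permutation of the
six oriented edges of the face `F`: for every oriented edge `(x,y)` of `F`
there is a unique image, and the assignment is injective. -/
theorem monodromy_is_permutation {V : Type} [Fintype V] [DecidableEq V]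
    (T : Triangulation V) (F : Finset V) (hF : F ∈ T.faces) :
    (∀ x y : V, x ∈ F → y ∈ F → x ≠ y →
      ∃! uv : V × V, T.MonodromyRel F x y uv.1 uv.2) ∧
    (∀ x y x' y' u v : V, x ∈ F → y ∈ F → x' ∈ F → y' ∈ F →
      T.MonodromyRel F x y u v → T.MonodromyRel F x' y' u v →
      x = x' ∧ y = y') := by
  refine ⟨fun x y hx hy hxy => ?_, fun x y x' y' u v _ _ _ _ h h' => h.left_unique hF h'⟩
  obtain ⟨u, v, h⟩ := Triangulation.exists_monodromyRel hF hx hy hxy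
  exact ⟨(u, v), h, fun uv h' => Prod.ext_iff.2 (h'.right_unique hF h)⟩
end

section
/- Let F be a face belonging to the face shadow F₁,...,Fₙ of a zigzag Z in a triangulation. Then there are at most three distinct indices i with F_i = F. If the triangulation is locally z-knotted in F (i.e., Z(F) = {Z, Z⁻¹}), then there are exactly three such indices. -/
open Finset

/-! At an occurrence of `F` at position `i` of the face shadow of `Z`, record the unordered pair
`{eᵢ, eᵢ₊₁}` of edges of `F`; a triangle has only three such pairs. Within one period distinct
positions give distinct pairs, because a flag `(eᵢ, eᵢ₊₁)` determines the zigzag in both directions: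
a repeated flag would give a shorter period, and a reversed flag `(eᵢ₊₁, eᵢ)` would make the zigzag
fold back onto itself, forcing two consecutive edges to coincide or an edge to meet the edge two
steps further. Conversely every ordered pair of distinct edges of `F` starts a zigzag; when
`𝒵(F) = {Z, Z⁻¹}` that zigzag is `Z` or `Z⁻¹`, so all three pairs occur. -/

theorem Finset.union_eq_of_card_eq_two {α : Type*} [DecidableEq α] {e e' F : Finset α}
    (he : e.card = 2) (he' : e'.card = 2) (hne : e ≠ e') (heF : e ⊆ F) (he'F : e' ⊆ F)
    (hF : F.card = 3) : e ∪ e' = F := by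
  have hlt : e.card < (e ∪ e').card := by
    refine card_lt_card (Finset.ssubset_iff_subset_ne.2 ⟨subset_union_left, fun h => hne ?_⟩)
    have he'e : e' ⊆ e := by rw [h]; exact subset_union_right
    exact (eq_of_subset_of_card_le he'e (by omega)).symm
  exact eq_of_subset_of_card_le (union_subset heF he'F) (by omega)

theorem Finset.card_powersetCard_two_powersetCard_two {α : Type*} {F : Finset α}
    (hF : F.card = 3) : ((F.powersetCard 2).powersetCard 2).card = 3 := by
  rw [card_powersetCard, card_powersetCard, hF]
  rfl

namespace Triangulation

variable {V : Type} [Fintype V] [DecidableEq V] (T : Triangulation V)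

/-- For an edge `e` of the face `F`, the other face containing `e`. -/
def otherFace (e F : Finset V) : Finset V :=
  ((T.faces.filter (e ⊆ ·)).erase F).sup id

structure IsFlag (d d' : Finset V) : Prop where
  card_left : d.card = 2
  card_right : d'.card = 2
  ne : d ≠ d'
  union_mem : d ∪ d' ∈ T.faces

def nextEdge (d d' : Finset V) : Finset V := T.otherFace d' (d ∪ d') \ d

def flagSeq (e e' : Finset V) : ℕ → Finset V
  | 0 => e
  | 1 => e'
  | n + 2 => T.nextEdge (flagSeq e e' n) (flagSeq e e' (n + 1))

variable {T}

theorem eq_otherFace_iff {e F G : Finset V} (he : e.card = 2) (hF : F ∈ T.faces) (heF : e ⊆ F) :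
    G = T.otherFace e F ↔ G ∈ T.faces ∧ e ⊆ G ∧ G ≠ F := by
  have hcard : ((T.faces.filter (e ⊆ ·)).erase F).card = 1 := by
    rw [card_erase_of_mem (mem_filter.2 ⟨hF, heF⟩), T.edge_two_faces e he ⟨F, hF, heF⟩]
  obtain ⟨H, hH⟩ := card_eq_one.1 hcard
  have hother : T.otherFace e F = H := by rw [otherFace, hH, sup_singleton, id]
  rw [hother, ← mem_singleton, ← hH, mem_erase, mem_filter]
  tauto

namespace IsFlag

variable {d d' : Finset V}

theorem symm (h : T.IsFlag d d') : T.IsFlag d' d :=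
  ⟨h.card_right, h.card_left, h.ne.symm, union_comm d d' ▸ h.union_mem⟩

theorem inter_nonempty (h : T.IsFlag d d') : (d ∩ d').Nonempty := by
  have := card_union_add_card_inter d d'
  rw [T.card_eq _ h.union_mem, h.card_left, h.card_right] at this
  exact card_pos.1 (by omega)

theorem nextEdge (h : T.IsFlag d d') :
    T.IsFlag d' (T.nextEdge d d') ∧ Disjoint d (T.nextEdge d d') ∧
      d' ∪ T.nextEdge d d' ≠ d ∪ d' := by
  set G := T.otherFace d' (d ∪ d')
  obtain ⟨hG, hd'G, hGne⟩ :=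
    (eq_otherFace_iff h.card_right h.union_mem subset_union_right).1 (rfl : G = G)
  have hGcard := T.card_eq G hG
  have hdG : ¬ d ⊆ G := fun hdG =>
    hGne (union_eq_of_card_eq_two h.card_left h.card_right h.ne hdG hd'G hGcard).symm
  have hdG_pos : 0 < (d ∩ G).card :=
    card_pos.2 (h.inter_nonempty.mono (inter_subset_inter_left hd'G))
  have hdG_lt : (d ∩ G).card < d.card :=
    card_lt_card (Finset.ssubset_iff_subset_ne.2
      ⟨inter_subset_left, fun he => hdG (inter_eq_left.1 he)⟩)
  have hcard : (G \ d).card = 2 := by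
    rw [card_sdiff, hGcard]
    have := h.card_left
    omega
  have hne : d' ≠ G \ d := by
    intro hd'
    obtain ⟨x, hx⟩ := h.inter_nonempty
    rw [mem_inter, hd', mem_sdiff] at hx
    exact hx.2.2 hx.1
  have hunion : d' ∪ (G \ d) = G :=
    union_eq_of_card_eq_two h.card_right hcard hne hd'G sdiff_subset hGcard
  refine ⟨⟨h.card_right, hcard, hne, hunion ▸ hG⟩, disjoint_sdiff, ?_⟩
  rw [Triangulation.nextEdge, hunion]
  exact hGne

theorem eq_nextEdge {d'' : Finset V} (h : T.IsFlag d d') (h' : T.IsFlag d' d'')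
    (hne : d' ∪ d'' ≠ d ∪ d') (hdisj : Disjoint d d'') : d'' = T.nextEdge d d' := by
  have hG : d' ∪ d'' = T.otherFace d' (d ∪ d') :=
    (eq_otherFace_iff h.card_right h.union_mem subset_union_right).2
      ⟨h'.union_mem, subset_union_left, hne⟩
  refine eq_of_subset_of_card_le (subset_sdiff.2 ⟨?_, hdisj.symm⟩) ?_
  · rw [← hG]
    exact subset_union_right
  · rw [h.nextEdge.1.card_right, h'.card_right]

end IsFlag

namespace IsZigzagSeq

variable {f : ℕ → Finset V}

theorem isFlag (hf : T.IsZigzagSeq f) (i : ℕ) : T.IsFlag (f i) (f (i + 1)) := by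
  obtain ⟨hne, -, F, hF, hi, hi'⟩ := hf.2.1 i
  refine ⟨(hf.1 i).1, (hf.1 (i + 1)).1, hne, ?_⟩
  rwa [union_eq_of_card_eq_two (hf.1 i).1 (hf.1 (i + 1)).1 hne hi hi' (T.card_eq F hF)]

theorem face_ne (hf : T.IsZigzagSeq f) (i : ℕ) : f i ∪ f (i + 1) ≠ f (i + 1) ∪ f (i + 2) :=
  hf.2.2.1 i _ (hf.isFlag i).union_mem _ (hf.isFlag (i + 1)).union_mem
    subset_union_left subset_union_right subset_union_left subset_union_right

theorem next_eq (hf : T.IsZigzagSeq f) (i : ℕ) : f (i + 2) = T.nextEdge (f i) (f (i + 1)) :=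
  (hf.isFlag i).eq_nextEdge (hf.isFlag (i + 1)) (hf.face_ne i).symm
    (disjoint_iff_inter_eq_empty.2 (hf.2.2.2 i))

theorem prev_eq (hf : T.IsZigzagSeq f) (i : ℕ) : f i = T.nextEdge (f (i + 2)) (f (i + 1)) := by
  refine (hf.isFlag (i + 1)).symm.eq_nextEdge (hf.isFlag i).symm ?_
    (disjoint_iff_inter_eq_empty.2 (hf.2.2.2 i)).symm
  rw [union_comm (f (i + 1)), union_comm (f (i + 2))]
  exact hf.face_ne i

theorem flag_shift_iff (hf : T.IsZigzagSeq f) (d k : ℕ) :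
    (f (k + 1) = f (k + 1 + d) ∧ f (k + 2) = f (k + 2 + d)) ↔
      (f k = f (k + d) ∧ f (k + 1) = f (k + 1 + d)) := by
  have h1 : k + 1 + d = k + d + 1 := by omega
  have h2 : k + 2 + d = k + d + 2 := by omega
  rw [h1, h2]
  constructor
  · rintro ⟨e1, e2⟩
    rw [hf.prev_eq k, hf.prev_eq (k + d), e1, e2]
    exact ⟨rfl, rfl⟩
  · rintro ⟨e0, e1⟩
    rw [hf.next_eq k, hf.next_eq (k + d), e0, e1]
    exact ⟨rfl, rfl⟩

theorem periodic_of_flag_eq (hf : T.IsZigzagSeq f) {a b : ℕ} (hab : a ≤ b) (h0 : f a = f b)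
    (h1 : f (a + 1) = f (b + 1)) : Function.Periodic f (b - a) := by
  obtain ⟨d, rfl⟩ := Nat.exists_eq_add_of_le hab
  rw [Nat.add_sub_cancel_left]
  have hshift : ∀ k, (f k = f (k + d) ∧ f (k + 1) = f (k + 1 + d)) ↔
      (f 0 = f d ∧ f 1 = f (1 + d)) := by
    intro k
    induction k with
    | zero => simp
    | succ k ih => exact (hf.flag_shift_iff d k).trans ih
  have ha := (hshift a).1 ⟨h0, by rwa [Nat.add_right_comm]⟩
  exact fun i => ((hshift i).2 ha).1.symm

theorem exists_periodic (hf : T.IsZigzagSeq f) :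
    ∃ p, 0 < p ∧ Function.Periodic f p := by
  obtain ⟨a, b, hab, heq⟩ := Finite.exists_ne_map_eq_of_infinite fun n => (f n, f (n + 1))
  simp only [Prod.mk.injEq] at heq
  rcases hab.lt_or_gt with hab | hab
  · exact ⟨b - a, by omega, hf.periodic_of_flag_eq hab.le heq.1 heq.2⟩
  · exact ⟨a - b, by omega, hf.periodic_of_flag_eq hab.le heq.1.symm heq.2.symm⟩

theorem not_reversed_flag_add (hf : T.IsZigzagSeq f) (n : ℕ) :
    ∀ a, ¬ (f a = f (a + n + 1) ∧ f (a + 1) = f (a + n)) := by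
  induction n using Nat.twoStepInduction with
  | zero => exact fun a h => (hf.2.1 a).1 h.1
  | one =>
    intro a h
    have hempty := hf.2.2.2 a
    rw [← h.1, inter_self] at hempty
    simpa [hempty] using (hf.1 a).1
  | more n ih _ =>
    rintro a ⟨e0, e1⟩
    have e2 : f (a + 2) = f (a + n + 1) := by
      rw [hf.next_eq a, e0, e1, hf.prev_eq (a + n + 1)]
      ring_nf
    exact ih (a + 1) ⟨e1.trans (congrArg f (by ring)), e2.trans (congrArg f (by ring))⟩

theorem not_reversed_flag (hf : T.IsZigzagSeq f) (a b : ℕ) :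
    ¬ (f a = f (b + 1) ∧ f (a + 1) = f b) := by
  rcases le_total a b with hab | hab
  · obtain ⟨n, rfl⟩ := Nat.exists_eq_add_of_le hab
    exact hf.not_reversed_flag_add n a
  · obtain ⟨n, rfl⟩ := Nat.exists_eq_add_of_le hab
    exact fun h => hf.not_reversed_flag_add n b ⟨h.2.symm, h.1.symm⟩

end IsZigzagSeq

namespace IsFlag

variable {e e' : Finset V}

theorem flagSeq (h : T.IsFlag e e') (n : ℕ) :
    T.IsFlag (T.flagSeq e e' n) (T.flagSeq e e' (n + 1)) := by
  induction n with
  | zero => exact h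
  | succ n ih => exact ih.nextEdge.1

theorem isZigzagSeq_flagSeq (h : T.IsFlag e e') : T.IsZigzagSeq (T.flagSeq e e') := by
  have hs := h.flagSeq
  refine ⟨fun i => ⟨(hs i).card_left, _, (hs i).union_mem, subset_union_left⟩,
    fun i => ⟨(hs i).ne, (hs i).inter_nonempty, _, (hs i).union_mem, subset_union_left,
      subset_union_right⟩, ?_, fun i => disjoint_iff_inter_eq_empty.1 (hs i).nextEdge.2.1⟩
  intro i F hF F' hF' h0 h1 h1' h2
  rw [← union_eq_of_card_eq_two (hs i).card_left (hs i).card_right (hs i).ne h0 h1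
      (T.card_eq F hF),
    ← union_eq_of_card_eq_two (hs (i + 1)).card_left (hs (i + 1)).card_right (hs (i + 1)).ne
      h1' h2 (T.card_eq F' hF')]
  exact (hs i).nextEdge.2.2.symm

theorem exists_zigzag (h : T.IsFlag e e') : ∃ Z : T.Zigzag, Z.seq 0 = e ∧ Z.seq 1 = e' := by
  classical
  have hf := h.isZigzagSeq_flagSeq
  have hp := hf.exists_periodic
  exact ⟨⟨T.flagSeq e e', Nat.find hp, (Nat.find_spec hp).1, (Nat.find_spec hp).2,
    fun m hm hm' => Nat.find_min' hp ⟨hm, hm'⟩, hf⟩, rfl, rfl⟩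

end IsFlag

namespace Zigzag

variable (Z : T.Zigzag)

def shadowFlag (i : ℕ) : Finset (Finset V) := {Z.seq i, Z.seq (i + 1)}

theorem seq_mod (n : ℕ) : Z.seq (n % Z.period) = Z.seq n :=
  Function.Periodic.map_mod_nat Z.periodic n

theorem seq_mod_add_one (n : ℕ) : Z.seq (n % Z.period + 1) = Z.seq (n + 1) := by
  rw [← Z.seq_mod, Nat.mod_add_mod, Z.seq_mod]

theorem two_le_period : 2 ≤ Z.period := by
  by_contra! hp
  have h1 := Z.periodic 0
  rw [show Z.period = 1 by have := Z.period_pos; omega] at h1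
  exact (Z.isZigzag.2.1 0).1 h1.symm

theorem eq_of_flag_eq {i j : ℕ} (hj : j < Z.period) (hij : i ≤ j)
    (h0 : Z.seq i = Z.seq j) (h1 : Z.seq (i + 1) = Z.seq (j + 1)) : i = j := by
  by_contra hne
  have := Z.period_min (j - i) (by omega) (Z.isZigzag.periodic_of_flag_eq hij h0 h1)
  omega

theorem shadowFlag_injOn : Set.InjOn Z.shadowFlag (range Z.period) := by
  intro i hi j hj h
  rw [shadowFlag, shadowFlag, ← coe_inj, coe_pair, coe_pair, Set.pair_eq_pair_iff] at h
  rcases h with ⟨h0, h1⟩ | ⟨h0, h1⟩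
  · rcases le_total i j with hij | hij
    · exact Z.eq_of_flag_eq (mem_range.1 hj) hij h0 h1
    · exact (Z.eq_of_flag_eq (mem_range.1 hi) hij h0.symm h1.symm).symm
  · exact (Z.isZigzag.not_reversed_flag i j ⟨h0, h1⟩).elim

variable {Z} {F : Finset V}

theorem shadowFlag_mem {i : ℕ} (h : Z.ShadowAt i F) :
    Z.shadowFlag i ∈ (F.powersetCard 2).powersetCard 2 := by
  refine mem_powersetCard.2 ⟨?_, card_pair (Z.isZigzag.2.1 i).1⟩
  rw [shadowFlag, insert_subset_iff, singleton_subset_iff]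
  exact ⟨mem_powersetCard.2 ⟨h.2.1, (Z.isZigzag.1 i).1⟩,
    mem_powersetCard.2 ⟨h.2.2, (Z.isZigzag.1 (i + 1)).1⟩⟩

theorem shadowAt_mod {n : ℕ} (h : Z.ShadowAt n F) : Z.ShadowAt (n % Z.period) F := by
  rw [ShadowAt, Z.seq_mod, Z.seq_mod_add_one]
  exact h

theorem shadowFlag_mod (n : ℕ) : Z.shadowFlag (n % Z.period) = Z.shadowFlag n := by
  rw [shadowFlag, Z.seq_mod, Z.seq_mod_add_one, shadowFlag]

theorem exists_shadowAt_shadowFlag_eq (hK : T.LocallyZKnotted F) (hZ : Z.Meets F)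
    (hF : F ∈ T.faces) {e e' : Finset V} (h : T.IsFlag e e') (he : e ⊆ F) (he' : e' ⊆ F) :
    ∃ n, Z.ShadowAt n F ∧ Z.shadowFlag n = {e, e'} := by
  obtain ⟨Z', h0, h1⟩ := h.exists_zigzag
  rcases hK.2 Z Z' hZ ⟨0, h0 ▸ he⟩ with ⟨k, hk⟩ | ⟨k, hk⟩
  · rw [hk, zero_add] at h0
    rw [hk, add_comm] at h1
    exact ⟨k, ⟨hF, h0 ▸ he, h1 ▸ he'⟩, by rw [shadowFlag, h0, h1]⟩
  · have hp := Z.two_le_period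
    rw [hk, Nat.zero_mod, Nat.sub_zero] at h0
    rw [hk, Nat.mod_eq_of_lt (by omega : 1 < Z.period)] at h1
    have hsucc : k + Z.period - 1 + 1 = k + Z.period := by omega
    refine ⟨k + Z.period - 1, ⟨hF, ?_, ?_⟩, ?_⟩
    · rwa [h1]
    · rwa [hsucc, h0]
    · rw [shadowFlag, hsucc, h0, h1, pair_comm]

variable [DecidablePred (Z.ShadowAt · F)]

theorem card_image_shadowFlag :
    (((range Z.period).filter (Z.ShadowAt · F)).image Z.shadowFlag).card =
      ((range Z.period).filter (Z.ShadowAt · F)).card :=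
  card_image_of_injOn (Z.shadowFlag_injOn.mono (coe_subset.2 (filter_subset _ _)))

theorem image_shadowFlag_subset :
    ((range Z.period).filter (Z.ShadowAt · F)).image Z.shadowFlag ⊆
      (F.powersetCard 2).powersetCard 2 :=
  image_subset_iff.2 fun _ hi => shadowFlag_mem (mem_filter.1 hi).2

theorem shadowFlag_mem_image {n : ℕ} (h : Z.ShadowAt n F) :
    Z.shadowFlag n ∈ ((range Z.period).filter (Z.ShadowAt · F)).image Z.shadowFlag :=
  mem_image.2 ⟨n % Z.period,
    mem_filter.2 ⟨mem_range.2 (Nat.mod_lt n Z.period_pos), shadowAt_mod h⟩, Z.shadowFlag_mod n⟩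

theorem card_filter_shadowAt_le_three (hF : F ∈ T.faces) :
    ((range Z.period).filter (Z.ShadowAt · F)).card ≤ 3 := by
  rw [← card_image_shadowFlag, ← card_powersetCard_two_powersetCard_two (T.card_eq F hF)]
  exact card_le_card image_shadowFlag_subset

theorem card_filter_shadowAt_eq_three (hF : F ∈ T.faces) (hZ : Z.Meets F)
    (hK : T.LocallyZKnotted F) : ((range Z.period).filter (Z.ShadowAt · F)).card = 3 := by
  rw [← card_image_shadowFlag, ← card_powersetCard_two_powersetCard_two (T.card_eq F hF)]
  refine congrArg card (image_shadowFlag_subset.antisymm fun s hs => ?_)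
  obtain ⟨hsub, hcard⟩ := mem_powersetCard.1 hs
  obtain ⟨e, e', hne, rfl⟩ := card_eq_two.1 hcard
  obtain ⟨he, he2⟩ := mem_powersetCard.1 (hsub (mem_insert_self e {e'}))
  obtain ⟨he', he'2⟩ := mem_powersetCard.1 (hsub (mem_insert_of_mem (mem_singleton_self e')))
  have hflag : T.IsFlag e e' :=
    ⟨he2, he'2, hne, by rwa [union_eq_of_card_eq_two he2 he'2 hne he he' (T.card_eq F hF)]⟩
  obtain ⟨n, hn, hflagn⟩ := exists_shadowAt_shadowFlag_eq hK hZ hF hflag he he'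
  exact hflagn ▸ shadowFlag_mem_image hn

end Zigzag

end Triangulation

open scoped Classical in
/-- a face `F` occurs at most three times in the face shadow of
any zigzag, and exactly three times if the triangulation is locally
z-knotted in `F`. -/
theorem face_shadow_occurrences {V : Type} [Fintype V] [DecidableEq V]
    (T : Triangulation V) (Z : T.Zigzag) (F : Finset V) (hF : F ∈ T.faces)
    (hmem : ∃ i, Z.ShadowAt i F) :
    ((Finset.range Z.period).filter fun i => Z.ShadowAt i F).card ≤ 3 ∧
    (T.LocallyZKnotted F →
      ((Finset.range Z.period).filter fun i => Z.ShadowAt i F).card = 3) := by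
  obtain ⟨i, hi⟩ := hmem
  exact ⟨Z.card_filter_shadowAt_le_three hF,
    Z.card_filter_shadowAt_eq_three hF ⟨i, hi.2.1⟩⟩
end

section
/- Every triangulation of a connected closed surface contains a face whose z-monodromy is not the identity. -/
open Finset

/-!
If every face had identity z-monodromy, a zigzag passing through a face `F` along the
oriented edges `(z, x), (x, y)` would, since a zigzag is determined by two consecutive edges,
come back to the oriented edge `(x, y)` without visiting `F` in between. Just before that
return it sits in the other face through `{x, y}`, which is the face it visited right after
`F`; so the return time of the next face is strictly smaller. Along one zigzag the return
times would then form a strictly decreasing sequence of natural numbers.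
-/

theorem Finset.exists_eq_pair_of_card_eq_two {α : Type*} [DecidableEq α] {s : Finset α}
    (hs : s.card = 2) {x : α} (hx : x ∈ s) : ∃ y, y ≠ x ∧ s = {y, x} := by
  obtain ⟨a, b, hab, rfl⟩ := card_eq_two.mp hs
  rcases mem_insert.mp hx with rfl | hxb
  · exact ⟨b, hab.symm, pair_comm _ _⟩
  · obtain rfl := mem_singleton.mp hxb
    exact ⟨a, hab, rfl⟩

namespace Triangulation

variable {V : Type} [Fintype V] [DecidableEq V] {T : Triangulation V}

theorem eq_of_edge_subset {e F G H : Finset V} (he : e.card = 2)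
    (hF : F ∈ T.faces) (hG : G ∈ T.faces) (hH : H ∈ T.faces)
    (heF : e ⊆ F) (heG : e ⊆ G) (heH : e ⊆ H) (hFG : F ≠ G) (hHF : H ≠ F) :
    H = G := by
  obtain ⟨A, B, -, hAB⟩ := card_eq_two.mp (T.edge_two_faces e he ⟨F, hF, heF⟩)
  have mem : ∀ X ∈ T.faces, e ⊆ X → X = A ∨ X = B := fun X hX heX => by
    have hmem := mem_filter.mpr ⟨hX, heX⟩
    rw [hAB] at hmem
    simpa using hmem
  rcases mem F hF heF with rfl | rfl <;> rcases mem G hG heG with rfl | rfl <;>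
    rcases mem H hH heH with rfl | rfl <;> tauto

namespace Zigzag

theorem card_seq (Z : T.Zigzag) (i : ℕ) : (Z.seq i).card = 2 := (Z.isZigzag.1 i).1

theorem disjoint_seq_add_two (Z : T.Zigzag) (i : ℕ) : Disjoint (Z.seq i) (Z.seq (i + 2)) :=
  disjoint_iff_inter_eq_empty.mpr (Z.isZigzag.2.2.2 i)

def face (Z : T.Zigzag) (i : ℕ) : Finset V := Z.seq i ∪ Z.seq (i + 1)

theorem face_mem (Z : T.Zigzag) (i : ℕ) : Z.face i ∈ T.faces := by
  obtain ⟨-, -, F, hF, hiF, hi1F⟩ := Z.isZigzag.2.1 i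
  have hss : Z.seq i ⊂ Z.face i := by
    refine Finset.ssubset_iff_subset_ne.mpr ⟨subset_union_left, fun h => ?_⟩
    have hsub : Z.seq (i + 1) ⊆ Z.seq i := h ▸ subset_union_right
    exact (Z.isZigzag.2.1 i).1
      (eq_of_subset_of_card_le hsub (by rw [card_seq, card_seq])).symm
  have hle : F.card ≤ (Z.face i).card := by
    have := card_lt_card hss
    rw [card_seq] at this
    rw [T.card_eq F hF]
    omega
  have hsub : Z.face i ⊆ F := union_subset hiF hi1F
  rwa [eq_of_subset_of_card_le hsub hle]

theorem face_ne_face_succ (Z : T.Zigzag) (i : ℕ) : Z.face i ≠ Z.face (i + 1) :=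
  Z.isZigzag.2.2.1 i _ (Z.face_mem i) _ (Z.face_mem (i + 1))
    subset_union_left subset_union_right
    subset_union_left subset_union_right

theorem seq_add_two_eq_sdiff (Z : T.Zigzag) (i : ℕ) :
    Z.seq (i + 2) = Z.face (i + 1) \ Z.seq i := by
  obtain ⟨x, hx⟩ := (Z.isZigzag.2.1 i).2.1
  have hsub : Z.seq (i + 2) ⊆ Z.face (i + 1) \ Z.seq i := fun v hv =>
    mem_sdiff.mpr ⟨mem_union_right _ hv,
      fun hvi => disjoint_left.mp (Z.disjoint_seq_add_two i) hvi hv⟩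
  refine eq_of_subset_of_card_le hsub ?_
  have hx' : x ∈ Z.seq i ∩ Z.face (i + 1) :=
    mem_inter.mpr ⟨(mem_inter.mp hx).1,
      mem_union_left _ (mem_inter.mp hx).2⟩
  rw [card_sdiff, T.card_eq _ (Z.face_mem _), card_seq]
  have := card_pos.mpr ⟨x, hx'⟩
  omega

theorem seq_add_eq_of_seq_eq {Z Z' : T.Zigzag} {a b : ℕ}
    (h₀ : Z.seq a = Z'.seq b) (h₁ : Z.seq (a + 1) = Z'.seq (b + 1)) (k : ℕ) :
    Z.seq (a + k) = Z'.seq (b + k) := by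
  induction k using Nat.strong_induction_on with
  | _ k ih =>
    match k, ih with
    | 0, _ => exact h₀
    | 1, _ => exact h₁
    | n + 2, ih =>
      have e₀ := ih n (by omega)
      have e₁ := ih (n + 1) (by omega)
      have hface : Z.face (a + n + 1) = Z'.face (b + n + 1) := by
        refine eq_of_edge_subset (Z.card_seq (a + n + 1)) (Z.face_mem (a + n))
          (Z'.face_mem (b + n + 1)) (Z.face_mem (a + n + 1)) subset_union_right
          ?_ subset_union_left ?_ (Z.face_ne_face_succ _).symm
        · rw [← add_assoc] at e₁; rw [e₁]; exact subset_union_left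
        · simp only [face, ← add_assoc] at e₀ e₁ ⊢
          rw [e₀, e₁]; exact Z'.face_ne_face_succ _
      rw [← add_assoc, ← add_assoc, seq_add_two_eq_sdiff, seq_add_two_eq_sdiff, hface, e₀]

theorem exists_passes_s10 (Z : T.Zigzag) (k : ℕ) : ∃ a b, Z.Passes k a b := by
  obtain ⟨b, hb⟩ := (Z.isZigzag.2.1 k).2.1
  rw [mem_inter] at hb
  obtain ⟨a, hab, hk⟩ := Finset.exists_eq_pair_of_card_eq_two (Z.card_seq k) hb.1
  exact ⟨a, b, hk, hab, hb.2⟩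

theorem Passes.exists_succ {Z : T.Zigzag} {t : ℕ} {z x : V} (h : Z.Passes t z x) :
    ∃ y, Z.Passes (t + 1) x y := by
  obtain ⟨a, b, hab⟩ := Z.exists_passes_s10 (t + 1)
  have hbx : b ≠ x := by
    rintro rfl
    exact disjoint_left.mp (Z.disjoint_seq_add_two t) (by simp [h.1]) hab.2.2
  have hax : a = x := by
    have hx := h.2.2
    rw [hab.1, mem_insert, mem_singleton] at hx
    exact (hx.resolve_right hbx.symm).symm
  exact ⟨b, hax ▸ hab⟩

theorem passes_add_iff {Z Z' : T.Zigzag} {i t : ℕ} (h : ∀ k, Z'.seq (i + k) = Z.seq (t + k))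
    (k : ℕ) (a b : V) : Z'.Passes (i + k) a b ↔ Z.Passes (t + k) a b := by
  unfold Passes
  rw [h, add_assoc i, add_assoc t, h]

def IsReturn (Z : T.Zigzag) (t s : ℕ) : Prop :=
  t + 2 < s ∧ Z.seq s = Z.seq (t + 1) ∧ ∀ k, t < k → k < s → Z.face k ≠ Z.face t

theorem exists_isReturn_of_MFIsId (Z : T.Zigzag) (t : ℕ) (h : T.MFIsId (Z.face t)) :
    ∃ s, Z.IsReturn t s := by
  obtain ⟨z, x, hzx⟩ := Z.exists_passes_s10 t
  obtain ⟨y, hxy⟩ := hzx.exists_succ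
  have hface : Z.face t = {z, x, y} := by
    ext v; simp [face, hzx.1, hxy.1]
  obtain ⟨-, -, Z', i, j, ⟨z', hz'F, hz'x, hz'y, hi⟩, hi1, hij, hj, -, -, hbetween⟩ :=
    h x y (by simp [hface]) (by simp [hface]) hxy.2.1
  have hz' : z' = z := by
    rw [hface] at hz'F
    simp only [mem_insert, mem_singleton] at hz'F
    tauto
  -- `Z'` passes `(z, x), (x, y)` at `i, i + 1` as `Z` does at `t, t + 1`, so it is `Z` shifted.
  have hshift : ∀ k, Z'.seq (i + k) = Z.seq (t + k) :=
    seq_add_eq_of_seq_eq (by rw [hi.1, hz', hzx.1]) (by rw [hi1.1, hxy.1])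
  obtain ⟨d, rfl⟩ := Nat.exists_eq_add_of_lt hij
  have hj' : Z'.Passes (i + (d + 2)) x y := by rwa [show i + (d + 2) = i + 1 + d + 1 by omega]
  have hret : Z.seq (t + (d + 2)) = Z.seq (t + 1) :=
    ((passes_add_iff hshift (d + 2) x y).mp hj').1.trans hxy.1.symm
  refine ⟨t + (d + 2), ?_, hret, fun k hk hks hk_face => ?_⟩
  · rcases Nat.eq_zero_or_pos d with rfl | hd
    · exact absurd hret.symm (Z.isZigzag.2.1 (t + 1)).1
    · omega
  · rcases Nat.lt_or_ge k (t + 2) with hkt | hkt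
    · obtain rfl : k = t + 1 := by omega
      exact Z.face_ne_face_succ t hk_face.symm
    · obtain ⟨a, b, hab⟩ := Z.exists_passes_s10 k
      have hmem : ∀ v ∈ Z.seq k, v ∈ Z.face t := fun v hv => hk_face ▸ mem_union_left _ hv
      have hk' : t + (k - t) = k := by omega
      exact hbetween (i + (k - t)) (by omega) (by omega) a b (hmem a (by simp [hab.1]))
        (hmem b (by simp [hab.1])) ((passes_add_iff hshift (k - t) a b).mpr (by rwa [hk']))

theorem IsReturn.lt_of_succ {Z : T.Zigzag} {t s s' : ℕ} (h : Z.IsReturn t s)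
    (h' : Z.IsReturn (t + 1) s') : s' < s := by
  obtain ⟨hts, hseq, hface⟩ := h
  by_contra! hss'
  have hprev : Z.face (s - 1) = Z.face (t + 1) := by
    refine eq_of_edge_subset (Z.card_seq (t + 1)) (Z.face_mem t) (Z.face_mem (t + 1))
      (Z.face_mem (s - 1)) subset_union_right subset_union_left ?_
      (Z.face_ne_face_succ t) (hface (s - 1) (by omega) (by omega))
    rw [← hseq, show s = s - 1 + 1 by omega]
    exact subset_union_right
  exact h'.2.2 (s - 1) (by omega) (by omega) hprev

end Zigzag

end Triangulation

/-- every triangulation contains a face whose z-monodromy is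
not the identity. -/
theorem exists_face_not_M1 {V : Type} [Fintype V] [DecidableEq V]
    (T : Triangulation V) :
    ∃ F ∈ T.faces, ¬ T.MFIsId F := by
  by_contra! hId
  obtain ⟨F, hF⟩ := T.faces_nonempty
  obtain ⟨x, hx, y, hy, hxy⟩ := one_lt_card.mp (by rw [T.card_eq F hF]; omega)
  obtain ⟨-, -, Z, -⟩ := hId F hF x y hx hy hxy
  choose s hs using fun t => Z.exists_isReturn_of_MFIsId t (hId _ (Z.face_mem t))
  exact not_strictAnti_of_wellFoundedLT s
    (strictAnti_nat_of_succ_lt fun t => (hs t).lt_of_succ (hs (t + 1)))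
end
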